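/- For each rooted transitive frame F and each n ≥ 1: F validates Wid_n^• iff every irreflexive antichain in F has at most n elements. -/

import Mathlib

/-!
`Wid_n^•` fails at `w` exactly when `w` sees points `u_0, …, u_n` with `u_i ⊨ p_i ∧ □¬p_i`
while no point seen from `w` that satisfies `p_i` satisfies or sees `p_j` for `j ≠ i`. Such
`u_i` are pairwise distinct and no `u_i` sees any `u_j` (not even itself): they form an
irreflexive antichain of `n + 1` points. Conversely an irreflexive antichain `a_0, …, a_n`
refutes the formula at the root under the valuation `p_i = {a_i}`: having at least two
points, it does not contain the root, so the root sees all of them.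
-/

/-- A Kripke frame: a set of worlds with a binary relation. -/
structure Frame where
  World : Type
  rel : World → World → Prop

/-- `f` is a reduction (surjective p-morphism) of `F` to `G`. -/
def Reduction (F G : Frame) (f : F.World → G.World) : Prop :=
  Function.Surjective f ∧
  (∀ w u, F.rel w u → G.rel (f w) (f u)) ∧
  (∀ w v, G.rel (f w) v → ∃ u, F.rel w u ∧ f u = v)

/-- `F` is reducible to `G`. -/
def Reducible (F G : Frame) : Prop := ∃ f, Reduction F G f

/-- The subframe of `F` generated by the point `w`. -/
def Frame.genSub (F : Frame) (w : F.World) : Frame :=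
  ⟨{v // Relation.ReflTransGen F.rel w v}, fun a b => F.rel a.1 b.1⟩

/-- Modal formulas over countably many propositional variables. -/
inductive Formula where
  | var : ℕ → Formula
  | bot : Formula
  | imp : Formula → Formula → Formula
  | box : Formula → Formula
deriving DecidableEq

namespace Formula

def neg (a : Formula) : Formula := .imp a .bot
def top : Formula := .imp .bot .bot
def and (a b : Formula) : Formula := neg (.imp a (neg b))
def or (a b : Formula) : Formula := .imp (neg a) b
def dia (a : Formula) : Formula := neg (.box (neg a))

/-- Finite conjunction of a list of formulas. -/
def bigConj (l : List Formula) : Formula := l.foldr and top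

/-- Finite disjunction of a list of formulas. -/
def bigDisj (l : List Formula) : Formula := l.foldr or .bot

end Formula

/-- Kripke satisfaction of a formula at a world of `F` under valuation `V`. -/
def Sat (F : Frame) (V : ℕ → F.World → Prop) : F.World → Formula → Prop
  | w, .var n => V n w
  | _, .bot => False
  | w, .imp a b => Sat F V w a → Sat F V w b
  | w, .box a => ∀ u, F.rel w u → Sat F V u a

/-- `φ` is valid at the point `w` of `F` (true under all valuations). -/
def SatAll (F : Frame) (w : F.World) (φ : Formula) : Prop := ∀ V, Sat F V w φ

/-- `φ` is valid in the frame `F`. -/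
def Valid (F : Frame) (φ : Formula) : Prop := ∀ V w, Sat F V w φ

/-- The formula `Wid_n^•`, with `p_i` encoded as variable `i`:
`⋀_{i≤n} ◇(p_i ∧ □¬p_i) → ⋁_{0 ≤ i ≠ j ≤ n} ◇(p_i ∧ (p_j ∨ ◇p_j))`. -/
def widBul (n : ℕ) : Formula :=
  .imp
    (Formula.bigConj ((List.finRange (n + 1)).map fun i =>
      Formula.dia (.and (.var i) (.box (Formula.neg (.var i))))))
    (Formula.bigDisj ((List.finRange (n + 1)).flatMap fun i =>
      (List.finRange (n + 1)).flatMap fun j =>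
        if i = j then []
        else [Formula.dia (.and (.var i) (.or (.var j) (Formula.dia (.var j))))]))

/-- `A` is an antichain w.r.t. `R`: distinct elements are `R`-incomparable. -/
def AntichainIn {W : Type*} (R : W → W → Prop) (A : Set W) : Prop :=
  ∀ u ∈ A, ∀ v ∈ A, u ≠ v → ¬ R u v ∧ ¬ R v u

section Semantics

variable {F : Frame} {V : ℕ → F.World → Prop} {w : F.World} {φ ψ : Formula}

@[simp] lemma sat_and : Sat F V w (.and φ ψ) ↔ Sat F V w φ ∧ Sat F V w ψ := by
  simp only [Formula.and, Formula.neg, Sat]; tauto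

@[simp] lemma sat_or : Sat F V w (.or φ ψ) ↔ Sat F V w φ ∨ Sat F V w ψ := by
  simp only [Formula.or, Formula.neg, Sat]; tauto

@[simp] lemma sat_neg : Sat F V w (.neg φ) ↔ ¬ Sat F V w φ := Iff.rfl

@[simp] lemma sat_dia : Sat F V w (.dia φ) ↔ ∃ u, F.rel w u ∧ Sat F V u φ := by
  simp [Formula.dia, Sat]

@[simp] lemma sat_bigConj {l : List Formula} :
    Sat F V w (Formula.bigConj l) ↔ ∀ χ ∈ l, Sat F V w χ := by
  induction l with
  | nil => simp [Formula.bigConj, Formula.top, Sat]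
  | cons χ l ih => simp_all [Formula.bigConj]

@[simp] lemma sat_bigDisj {l : List Formula} :
    Sat F V w (Formula.bigDisj l) ↔ ∃ χ ∈ l, Sat F V w χ := by
  induction l with
  | nil => simp [Formula.bigDisj, Sat]
  | cons χ l ih => simp_all [Formula.bigDisj]

lemma sat_widBul {n : ℕ} : Sat F V w (widBul n) ↔
    ((∀ i : Fin (n + 1), ∃ u, F.rel w u ∧ V i u ∧ ∀ v, F.rel u v → ¬ V i v) →
      ∃ i j : Fin (n + 1), i ≠ j ∧
        ∃ v, F.rel w v ∧ V i v ∧ (V j v ∨ ∃ x, F.rel v x ∧ V j x)) := by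
  simp [widBul, Sat, Fin.val_inj]

lemma exists_injective_of_not_sat_widBul {n : ℕ} (h : ¬ Sat F V w (widBul n)) :
    ∃ a : Fin (n + 1) → F.World, Function.Injective a ∧ ∀ i j, ¬ F.rel (a i) (a j) := by
  rw [sat_widBul, Classical.not_imp] at h
  obtain ⟨hex, hsep⟩ := h
  push Not at hsep
  choose a hwa hVa hbox using hex
  have hsep_at (i j : Fin (n + 1)) (hij : i ≠ j) : ¬ V j (a i) ∧ ∀ x, F.rel (a i) x → ¬ V j x :=
    hsep i j hij (a i) (hwa i) (hVa i)
  refine ⟨a, fun i j hij => by_contra fun hne => (hsep_at i j hne).1 (hij ▸ hVa j),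
    fun i j hR => ?_⟩
  by_cases hij : i = j
  · subst hij
    exact hbox i _ hR (hVa i)
  · exact (hsep_at i j hij).2 _ hR (hVa j)

lemma exists_not_sat_widBul {n : ℕ} {a : Fin (n + 1) → F.World} (ha : Function.Injective a)
    (hR : ∀ i j, ¬ F.rel (a i) (a j)) (hw : ∀ i, F.rel w (a i)) :
    ∃ V, ¬ Sat F V w (widBul n) := by
  refine ⟨fun k x => ∃ i : Fin (n + 1), (i : ℕ) = k ∧ x = a i, ?_⟩
  rw [sat_widBul, Classical.not_imp]
  refine ⟨fun i => ⟨a i, hw i, ⟨i, rfl, rfl⟩, ?_⟩, ?_⟩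
  · rintro v hv ⟨j, -, rfl⟩
    exact hR i j hv
  · rintro ⟨i, j, hij, v, -, ⟨i', hi', rfl⟩, ⟨j', hj', hv⟩ | ⟨x, hx, j', -, rfl⟩⟩
    · exact hij (Fin.ext (hi'.symm.trans ((congrArg Fin.val (ha hv)).trans hj')))
    · exact hR i' j' hx

end Semantics

lemma antichainIn_and_irrefl_iff {W : Type*} {R : W → W → Prop} {A : Set W} :
    (AntichainIn R A ∧ ∀ a ∈ A, ¬ R a a) ↔ ∀ u ∈ A, ∀ v ∈ A, ¬ R u v := by
  constructor
  · rintro ⟨hA, hirr⟩ u hu v hv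
    by_cases h : u = v
    · exact h ▸ hirr u hu
    · exact (hA u hu v hv h).1
  · exact fun h => ⟨fun u hu v hv _ => ⟨h u hu v hv, h v hv u hu⟩, fun a ha => h a ha a ha⟩

lemma forall_mk_le_iff_not_exists_fin {W : Type*} (P : W → W → Prop) (n : ℕ) :
    (∀ A : Set W, (∀ u ∈ A, ∀ v ∈ A, P u v) → Cardinal.mk A ≤ n) ↔
      ¬ ∃ a : Fin (n + 1) → W, Function.Injective a ∧ ∀ i j, P (a i) (a j) := by
  constructor
  · rintro h ⟨a, ha, hP⟩
    have hle := h (Set.range a) (by rintro _ ⟨i, rfl⟩ _ ⟨j, rfl⟩; exact hP i j)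
    have hcard := Cardinal.mk_range_eq_of_injective ha
    simp only [Cardinal.lift_uzero, Cardinal.mk_fin, Cardinal.lift_natCast] at hcard
    rw [hcard, Nat.cast_le] at hle
    omega
  · intro h A hA
    by_contra! hlt
    obtain ⟨e⟩ : Nonempty (Fin (n + 1) ↪ A) :=
      Cardinal.lift_mk_le'.mp (by simpa using Cardinal.add_one_le_of_lt hlt)
    exact h ⟨fun i => e i, fun i j hij => e.injective (Subtype.ext hij),
      fun i j => hA _ (e i).2 _ (e j).2⟩

lemma forall_irrefl_antichain_mk_le_iff {W : Type*} (R : W → W → Prop) (n : ℕ) :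
    (∀ A : Set W, AntichainIn R A → (∀ a ∈ A, ¬ R a a) → Cardinal.mk A ≤ n) ↔
      ¬ ∃ a : Fin (n + 1) → W, Function.Injective a ∧ ∀ i j, ¬ R (a i) (a j) := by
  refine Iff.trans (forall_congr' fun A => ?_) (forall_mk_le_iff_not_exists_fin (¬ R · ·) n)
  rw [← antichainIn_and_irrefl_iff, and_imp]

lemma rel_of_forall_eq_or_rel {ι W : Type*} [Nontrivial ι] {R : W → W → Prop} {w : W}
    (hw : ∀ u, u = w ∨ R w u) {a : ι → W} (ha : Function.Injective a)
    (hR : ∀ i j, ¬ R (a i) (a j)) (i : ι) : R w (a i) := by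
  obtain ⟨j, hji⟩ := exists_ne i
  refine (hw (a i)).resolve_left fun hi => ?_
  have hj : R w (a j) := (hw (a j)).resolve_left fun hj => hji (ha (hj.trans hi.symm))
  exact hR i j (hi ▸ hj)

theorem widBul_valid_iff_general (n : ℕ) (hn : 1 ≤ n) (F : Frame)
    (hroot : ∃ w : F.World, ∀ u, u = w ∨ F.rel w u) :
    Valid F (widBul n) ↔
      ∀ A : Set F.World, AntichainIn F.rel A → (∀ a ∈ A, ¬ F.rel a a) →
        Cardinal.mk A ≤ (n : Cardinal) := by
  rw [forall_irrefl_antichain_mk_le_iff]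
  constructor
  · rintro hval ⟨a, ha, hR⟩
    have : Nontrivial (Fin (n + 1)) := Fin.nontrivial_iff_two_le.mpr (by omega)
    obtain ⟨w, hw⟩ := hroot
    obtain ⟨V, hV⟩ := exists_not_sat_widBul ha hR (rel_of_forall_eq_or_rel hw ha hR)
    exact hV (hval V w)
  · intro h V w
    by_contra hw
    exact h (exists_injective_of_not_sat_widBul hw)

/-- For a rooted transitive frame, `Wid_n^•` is valid iff every irreflexive
antichain in the frame has at most `n` elements. -/
theorem widBul_valid_iff (n : ℕ) (hn : 1 ≤ n) (F : Frame)
    (htr : ∀ a b c, F.rel a b → F.rel b c → F.rel a c)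
    (hroot : ∃ w : F.World, ∀ u, u = w ∨ F.rel w u) :
    Valid F (widBul n) ↔
      ∀ A : Set F.World, AntichainIn F.rel A → (∀ a ∈ A, ¬ F.rel a a) →
        Cardinal.mk A ≤ (n : Cardinal) :=
  widBul_valid_iff_general n hn F hroot
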